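/- Function reflection from surjectivity: let 𝔹 be a complete Boolean algebra, x, y : pSet with y nonempty, f : bSet 𝔹, and Γ : 𝔹 with ⊥ < Γ. If Γ forces that f is a surjective function from x̌ onto y̌, then for every index i of y there exists an index j of x such that ⊥ < (is_func f) ⊓ (pair (x.func j)̌ (y.func i)̌ ∈ᴮ f). -/
import Mathlib


universe u

/-- Boolean-valued sets over a complete Boolean algebra `𝔹`. -/
inductive bSet (𝔹 : Type u) [CompleteBooleanAlgebra 𝔹] : Type (u + 1)
  | mk (α : Type u) (A : α → bSet 𝔹) (B : α → 𝔹) : bSet 𝔹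

namespace bSet

variable {𝔹 : Type u} [CompleteBooleanAlgebra 𝔹]

/-- Boolean-valued equality:
`⟨α,A,B⟩ =ᴮ ⟨α\u0027,A\u0027,B\u0027⟩ := (⨅ a, B a ⟹ ⨆ a\u0027, B\u0027 a\u0027 ⊓ (A a =ᴮ A\u0027 a\u0027)) ⊓ (symmetrically)`. -/
def bvEq : bSet 𝔹 → bSet 𝔹 → 𝔹
  | ⟨_, A, B⟩, ⟨_, A', B'⟩ =>
      (⨅ a, B a ⇨ ⨆ a', B' a' ⊓ bvEq (A a) (A' a')) ⊓
      (⨅ a', B' a' ⇨ ⨆ a, B a ⊓ bvEq (A a) (A' a'))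

/-- Boolean-valued membership: `x ∈ᴮ ⟨α,A,B⟩ := ⨆ a, B a ⊓ (x =ᴮ A a)`. -/
def bvMem (x : bSet 𝔹) : bSet 𝔹 → 𝔹
  | ⟨_, A, B⟩ => ⨆ a, B a ⊓ bvEq x (A a)

/-- Boolean-valued subset. -/
def bvSubset : bSet 𝔹 → bSet 𝔹 → 𝔹
  | ⟨_, A, B⟩, y => ⨅ a, B a ⇨ bvMem (A a) y

/-- Boolean-valued biimplication. -/
def biimp (a b : 𝔹) : 𝔹 := (a ⇨ b) ⊓ (b ⇨ a)

end bSet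

namespace bSet

variable (𝔹 : Type u) [CompleteBooleanAlgebra 𝔹]

/-- The canonical name map `check : pSet → bSet 𝔹`, assigning truth value `⊤` everywhere. -/
def check : PSet.{u} → bSet 𝔹
  | ⟨α, A⟩ => ⟨α, fun a => check (A a), fun _ => ⊤⟩

variable {𝔹}

/-- The unordered pair `{x, y}` in `bSet 𝔹`. -/
def bvUPair (x y : bSet 𝔹) : bSet 𝔹 :=
  ⟨ULift Bool, fun b => cond b.down x y, fun _ => ⊤⟩

/-- The Kuratowski ordered pair `(x, y) = {{x}, {x, y}}` in `bSet 𝔹`. -/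
def kpair (x y : bSet 𝔹) : bSet 𝔹 := bvUPair (bvUPair x x) (bvUPair x y)

/-- Truth value that `f` is a functional set of ordered pairs. -/
def isFunc (f : bSet 𝔹) : 𝔹 :=
  (⨅ w : bSet 𝔹, bvMem w f ⇨ ⨆ x : bSet 𝔹, ⨆ y : bSet 𝔹, bvEq w (kpair x y)) ⊓
  (⨅ x : bSet 𝔹, ⨅ y : bSet 𝔹, ⨅ y' : bSet 𝔹,
    (bvMem (kpair x y) f ⊓ bvMem (kpair x y') f) ⇨ bvEq y y')

/-- Truth value that `f` is total on `x` with values in `y`. -/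
def isTotal (x y f : bSet 𝔹) : 𝔹 :=
  ⨅ a : bSet 𝔹, bvMem a x ⇨ ⨆ b : bSet 𝔹, bvMem b y ⊓ bvMem (kpair a b) f

/-- Truth value that `f` is a function from `x` to `y`. -/
def isFunc' (x y f : bSet 𝔹) : 𝔹 :=
  isFunc f ⊓ isTotal x y f ⊓
    (⨅ a : bSet 𝔹, ⨅ b : bSet 𝔹, bvMem (kpair a b) f ⇨ (bvMem a x ⊓ bvMem b y))

/-- Truth value that every element of `y` is a value of `f` taken on `x`. -/
def isSurj (x y f : bSet 𝔹) : 𝔹 :=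
  ⨅ b : bSet 𝔹, bvMem b y ⇨ ⨆ a : bSet 𝔹, bvMem a x ⊓ bvMem (kpair a b) f

/-- Truth value that `f` is a surjective function from `x` onto `y`. -/
def isSurjOnto (x y f : bSet 𝔹) : 𝔹 := isFunc' x y f ⊓ isSurj x y f

end bSet

namespace bSet

variable {𝔹 : Type u} [CompleteBooleanAlgebra 𝔹]

lemma sup_elim {ι : Sort*} {Γ c : 𝔹} {f : ι → 𝔹} (h : Γ ≤ ⨆ i, f i)
    (h2 : ∀ i, Γ ⊓ f i ≤ c) : Γ ≤ c := by
  have h3 : Γ ≤ Γ ⊓ ⨆ i, f i := le_inf le_rfl h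
  rw [inf_iSup_eq] at h3
  exact h3.trans (iSup_le fun i => h2 i)

theorem bvEq_refl : ∀ x : bSet 𝔹, bvEq x x = ⊤ := by
  intro x
  induction x with
  | mk α A B ih =>
    apply top_unique
    simp only [bvEq]
    refine le_inf ?_ ?_ <;>
    · refine le_iInf fun a => ?_
      rw [le_himp_iff]
      refine le_trans ?_ (le_iSup _ a)
      simp [ih a]

theorem bvEq_symm : ∀ x y : bSet 𝔹, bvEq x y = bvEq y x := by
  intro x
  induction x with
  | mk α A B ih =>
    intro y
    cases y with
    | mk α' A' B' =>
      simp only [bvEq]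
      rw [inf_comm]
      simp only [ih]

theorem bvEq_trans : ∀ x y z : bSet 𝔹, bvEq x y ⊓ bvEq y z ≤ bvEq x z := by
  intro x
  induction x with
  | mk α A B ih =>
    intro y z
    cases y with
    | mk α' A' B' =>
    cases z with
    | mk α'' A'' B'' =>
      simp only [bvEq]
      set P1 : 𝔹 := ⨅ a, B a ⇨ ⨆ a', B' a' ⊓ bvEq (A a) (A' a') with hP1
      set P2 : 𝔹 := ⨅ a', B' a' ⇨ ⨆ a, B a ⊓ bvEq (A a) (A' a') with hP2
      set Q1 : 𝔹 := ⨅ a', B' a' ⇨ ⨆ a'', B'' a'' ⊓ bvEq (A' a') (A'' a'') with hQ1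
      set Q2 : 𝔹 := ⨅ a'', B'' a'' ⇨ ⨆ a', B' a' ⊓ bvEq (A' a') (A'' a'') with hQ2
      set G : 𝔹 := (P1 ⊓ P2) ⊓ (Q1 ⊓ Q2) with hG
      refine le_inf (le_iInf fun a => ?_) (le_iInf fun a'' => ?_)
      · rw [le_himp_iff]
        have h1 : G ⊓ B a ≤ ⨆ a', B' a' ⊓ bvEq (A a) (A' a') := by
          rw [← le_himp_iff]
          exact le_trans inf_le_left (le_trans inf_le_left (iInf_le _ a))
        refine sup_elim h1 fun a' => ?_
        have h2 : (G ⊓ B a) ⊓ (B' a' ⊓ bvEq (A a) (A' a')) ≤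
            ⨆ a'', B'' a'' ⊓ bvEq (A' a') (A'' a'') := by
          have hq : G ≤ B' a' ⇨ ⨆ a'', B'' a'' ⊓ bvEq (A' a') (A'' a'') :=
            le_trans inf_le_right (le_trans inf_le_left (iInf_le _ a'))
          rw [le_himp_iff] at hq
          exact le_trans (le_inf (le_trans inf_le_left inf_le_left)
            (le_trans inf_le_right inf_le_left)) hq
        refine sup_elim h2 fun a'' => ?_
        refine le_trans ?_ (le_iSup _ a'')
        refine le_inf (le_trans inf_le_right inf_le_left) ?_
        refine le_trans ?_ (ih a (A' a') (A'' a''))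
        exact le_inf (le_trans inf_le_left (le_trans inf_le_right inf_le_right))
          (le_trans inf_le_right inf_le_right)
      · rw [le_himp_iff]
        have h1 : G ⊓ B'' a'' ≤ ⨆ a', B' a' ⊓ bvEq (A' a') (A'' a'') := by
          rw [← le_himp_iff]
          exact le_trans inf_le_right (le_trans inf_le_right (iInf_le _ a''))
        refine sup_elim h1 fun a' => ?_
        have h2 : (G ⊓ B'' a'') ⊓ (B' a' ⊓ bvEq (A' a') (A'' a'')) ≤
            ⨆ a, B a ⊓ bvEq (A a) (A' a') := by
          have hq : G ≤ B' a' ⇨ ⨆ a, B a ⊓ bvEq (A a) (A' a') :=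
            le_trans inf_le_left (le_trans inf_le_right (iInf_le _ a'))
          rw [le_himp_iff] at hq
          exact le_trans (le_inf (le_trans inf_le_left inf_le_left)
            (le_trans inf_le_right inf_le_left)) hq
        refine sup_elim h2 fun a => ?_
        refine le_trans ?_ (le_iSup _ a)
        refine le_inf (le_trans inf_le_right inf_le_left) ?_
        refine le_trans ?_ (ih a (A' a') (A'' a''))
        exact le_inf (le_trans inf_le_right inf_le_right)
          (le_trans inf_le_left (le_trans inf_le_right inf_le_right))

theorem mem_congr_left {x y z : bSet 𝔹} : bvEq x y ⊓ bvMem x z ≤ bvMem y z := by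
  cases z with
  | mk γ C D =>
    simp only [bvMem]
    refine sup_elim inf_le_right fun c => ?_
    refine le_trans ?_ (le_iSup _ c)
    refine le_inf (le_trans inf_le_right inf_le_left) ?_
    refine le_trans ?_ (bvEq_trans y x (C c))
    refine le_inf ?_ (le_trans inf_le_right inf_le_right)
    rw [← bvEq_symm]
    exact le_trans inf_le_left inf_le_left

theorem upair_congr {x x' y y' : bSet 𝔹} :
    bvEq x x' ⊓ bvEq y y' ≤ bvEq (bvUPair x y) (bvUPair x' y') := by
  simp only [bvEq, bvUPair]
  refine le_inf (le_iInf fun b => ?_) (le_iInf fun b => ?_) <;>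
    rw [le_himp_iff, inf_top_eq] <;>
    refine le_trans ?_ (le_iSup _ b) <;>
    rcases b with ⟨_ | _⟩ <;>
    simp only [cond_false, cond_true, le_inf_iff, le_top, true_and]
  · exact inf_le_right
  · exact inf_le_left
  · rw [bvEq_symm]; exact inf_le_right
  · rw [bvEq_symm]; exact inf_le_left

theorem kpair_congr_left {a a' b : bSet 𝔹} :
    bvEq a a' ≤ bvEq (kpair a b) (kpair a' b) := by
  have h1 : bvEq a a' ≤ bvEq (bvUPair a a) (bvUPair a' a') :=
    le_trans (le_inf le_rfl le_rfl) upair_congr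
  have h2 : bvEq a a' ≤ bvEq (bvUPair a b) (bvUPair a' b) :=
    le_trans (le_inf le_rfl (by simp [bvEq_refl])) upair_congr
  exact le_trans (le_inf h1 h2) upair_congr

theorem check_mem {y : PSet.{u}} (i : y.Type) :
    (⊤ : 𝔹) ≤ bvMem (check 𝔹 (y.Func i)) (check 𝔹 y) := by
  cases y with
  | mk α A =>
    simp only [check, bvMem]
    refine le_trans ?_ (le_iSup _ i)
    simp [bvEq_refl]

theorem mem_check_eq {x : PSet.{u}} (a : bSet 𝔹) :
    bvMem a (check 𝔹 x) = ⨆ j : x.Type, ⊤ ⊓ bvEq a (check 𝔹 (x.Func j)) := by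
  cases x
  rfl

end bSet

open bSet in
/-- Reflection of surjectivity between check-names: if a nonzero `Γ` forces `f` to be
a surjection from `x̌` onto `y̌` (with `y` nonempty), then for every index `i` of `y`
there is an index `j` of `x` such that the truth value
`is_func f ⊓ (pair (x.func j)̌ (y.func i)̌ ∈ᴮ f)` is nonzero. -/
theorem AE_of_check_larger_than_check {𝔹 : Type u} [CompleteBooleanAlgebra 𝔹]
    {x y : PSet.{u}} (f : bSet 𝔹) {Γ : 𝔹} (H_nonzero : ⊥ < Γ)
    (H : Γ ≤ isSurjOnto (check 𝔹 x) (check 𝔹 y) f) (Hy : ∃ z : PSet.{u}, z ∈ y) :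
    ∀ i : y.Type, ∃ j : x.Type,
      ⊥ < isFunc f ⊓ bvMem (kpair (check 𝔹 (x.Func j)) (check 𝔹 (y.Func i))) f := by
  intro i
  set b := check 𝔹 (y.Func i) with hb
  have hF : Γ ≤ isFunc f :=
    H.trans (le_trans inf_le_left (le_trans inf_le_left inf_le_left))
  have hS : Γ ≤ isSurj (check 𝔹 x) (check 𝔹 y) f := H.trans inf_le_right
  have h1 : Γ ≤ ⨆ a : bSet 𝔹, bvMem a (check 𝔹 x) ⊓ bvMem (kpair a b) f := by
    have h0 : Γ ≤ bvMem b (check 𝔹 y) ⇨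
        ⨆ a : bSet 𝔹, bvMem a (check 𝔹 x) ⊓ bvMem (kpair a b) f :=
      hS.trans (iInf_le _ b)
    rw [le_himp_iff] at h0
    exact le_trans (le_inf le_rfl (le_top.trans (check_mem i))) h0
  have h2 : Γ ≤ ⨆ j : x.Type,
      isFunc f ⊓ bvMem (kpair (check 𝔹 (x.Func j)) b) f := by
    refine sup_elim h1 fun a => ?_
    have h3 : Γ ⊓ (bvMem a (check 𝔹 x) ⊓ bvMem (kpair a b) f) ≤
        ⨆ j : x.Type, ⊤ ⊓ bvEq a (check 𝔹 (x.Func j)) := by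
      rw [← mem_check_eq]
      exact le_trans inf_le_right inf_le_left
    refine sup_elim h3 fun j => ?_
    refine le_trans ?_ (le_iSup _ j)
    refine le_inf (le_trans inf_le_left (le_trans inf_le_left hF)) ?_
    refine le_trans ?_ (mem_congr_left (x := kpair a b))
    refine le_inf ?_ (le_trans inf_le_left (le_trans inf_le_right inf_le_right))
    exact le_trans (le_trans inf_le_right inf_le_right) kpair_congr_left
  by_contra hcon
  push_neg at hcon
  have hall : ∀ j : x.Type,
      isFunc f ⊓ bvMem (kpair (check 𝔹 (x.Func j)) b) f = ⊥ := by
    intro j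
    have := hcon j
    rcases (bot_le (a := isFunc f ⊓ bvMem (kpair (check 𝔹 (x.Func j)) b) f)).lt_or_eq with h | h
    · exact absurd h this
    · exact h.symm
  have : Γ ≤ (⊥ : 𝔹) := h2.trans (by simp [hall])
  exact absurd (H_nonzero.trans_le this) (lt_irrefl _)
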